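/- arXiv:2502.06306 — 2 statements merged into one kernel-verified Lean document; each statement's English description precedes it below -/
import Mathlib

section
/- Let a : ℝ³ → ℝ be a smooth, compactly supported, nonnegative function. Then for every ε > 0 there exists a constant C_ε > 0 such that for all x ∈ ℝ³, ‖∇a(x)‖ ≤ C_ε a(x) + ε. -/
noncomputable section

open MeasureTheory Real Set Filter

/-- `ℝ³` with its euclidean structure. -/
abbrev V3 : Type := EuclideanSpace ℝ (Fin 3)

/-- Partial derivative in direction `i` of a complex-valued function on `ℝ³`. -/
def pd (i : Fin 3) (f : V3 → ℂ) (x : V3) : ℂ :=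
  fderiv ℝ f x (EuclideanSpace.single i 1)

/-- Partial derivative in direction `i` of a real-valued function on `ℝ³`. -/
def pdR (i : Fin 3) (f : V3 → ℝ) (x : V3) : ℝ :=
  fderiv ℝ f x (EuclideanSpace.single i 1)

/-- Time derivative. -/
def timeDeriv (u : ℝ → V3 → ℂ) (t : ℝ) (x : V3) : ℂ :=
  deriv (fun s => u s x) t

/-- `div (G ∇ f) = Σᵢⱼ ∂ᵢ (Gᵢⱼ ∂ⱼ f)` for a complex-valued `f`. -/
def divG (G : V3 → Matrix (Fin 3) (Fin 3) ℝ) (f : V3 → ℂ) (x : V3) : ℂ :=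
  ∑ i, ∑ j, pd i (fun y => (G y i j : ℂ) * pd j f y) x

/-- Squared euclidean norm of the spatial gradient of a complex-valued function. -/
def gradSq (f : V3 → ℂ) (x : V3) : ℝ :=
  ∑ i, ‖pd i f x‖ ^ 2

/-- The structural assumptions on the coefficients `G` (smooth, symmetric, uniformly
elliptic, equal to the identity outside a compact set) and `a` (smooth, nonnegative,
compactly supported). -/
structure Coeffs (G : V3 → Matrix (Fin 3) (Fin 3) ℝ) (a : V3 → ℝ) : Prop where
  G_smooth : ∀ i j, ContDiff ℝ (⊤ : ℕ∞) fun x => G x i j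
  G_symm : ∀ x i j, G x i j = G x j i
  G_elliptic : ∃ c > 0, ∀ (x : V3) (ξ : Fin 3 → ℝ),
    c * ∑ i, ξ i ^ 2 ≤ ∑ i, ∑ j, ξ i * G x i j * ξ j
  G_cpt : IsCompact (closure {x : V3 | G x ≠ 1})
  a_smooth : ContDiff ℝ (⊤ : ℕ∞) a
  a_nonneg : ∀ x, 0 ≤ a x
  a_cpt : HasCompactSupport a

/-- A classical solution of the damped NLS `i ∂ₜ u + div (G ∇ u) + i a u = |u|² u`, the
equation being imposed for times in `s` : it is smooth in `(t, x)`, and all space-time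
derivatives decay in `x` faster than any inverse power of `‖x‖`, locally uniformly in `t`. -/
structure IsSolution (G : V3 → Matrix (Fin 3) (Fin 3) ℝ) (a : V3 → ℝ)
    (s : Set ℝ) (u : ℝ → V3 → ℂ) : Prop where
  smooth : ContDiff ℝ (⊤ : ℕ∞) fun p : ℝ × V3 => u p.1 p.2
  decay : ∀ (n k : ℕ) (K : Set ℝ), IsCompact K → ∃ C : ℝ, ∀ t ∈ K, ∀ x : V3,
    ‖x‖ ^ k * ‖iteratedFDeriv ℝ n (fun p : ℝ × V3 => u p.1 p.2) (t, x)‖ ≤ C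
  eqn : ∀ t ∈ s, ∀ x : V3,
    Complex.I * timeDeriv u t x + divG G (u t) x + Complex.I * (a x : ℂ) * u t x
      = (‖u t x‖ : ℂ) ^ 2 * u t x

/-- The (real) energy `E[f] = ½ ∫ G ∇f · ∇f̄ + ¼ ∫ |f|⁴`. -/
def energy (G : V3 → Matrix (Fin 3) (Fin 3) ℝ) (f : V3 → ℂ) : ℝ :=
  (1 / 2) * (∫ x : V3, ∑ i, ∑ j, G x i j * (pd i f x * (starRingEnd ℂ) (pd j f x)).re)
    + (1 / 4) * ∫ x : V3, ‖f x‖ ^ 4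

/-- `∫ (|f|² + ‖∇f‖²) + ∫ |f|⁴`, the quantity measuring the size of the initial data. -/
def initialData (f : V3 → ℂ) : ℝ :=
  (∫ x : V3, (‖f x‖ ^ 2 + gradSq f x)) + ∫ x : V3, ‖f x‖ ^ 4

/-! Where `a` vanishes it is minimal, so `∇a = 0` there. Hence the compact set `{‖∇a‖ ≥ ε}`
avoids the zeros of `a`, and the continuous quotient `‖∇a‖ / a` is bounded on it. -/

theorem exists_le_mul_add_of_hasCompactSupport {X : Type*} [TopologicalSpace X] {f g : X → ℝ}
    (hf : Continuous f) (hf_nonneg : ∀ x, 0 ≤ f x) (hg : Continuous g)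
    (hg_cpt : HasCompactSupport g) (hg_zero : ∀ x, f x = 0 → g x ≤ 0) {ε : ℝ} (hε : 0 < ε) :
    ∃ C > 0, ∀ x, g x ≤ C * f x + ε := by
  set K := {x | ε ≤ g x}
  have hK : IsCompact K := by
    refine hg_cpt.of_isClosed_subset (isClosed_le continuous_const hg) fun x hx => ?_
    exact subset_tsupport g (show g x ≠ 0 from (hε.trans_le hx).ne')
  have hf_pos : ∀ x ∈ K, 0 < f x := fun x hx =>
    (hf_nonneg x).lt_of_ne fun h => (hg_zero x h.symm).not_gt (hε.trans_le hx)
  obtain ⟨B, hB⟩ := hK.bddAbove_image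
    (hg.continuousOn.div hf.continuousOn fun x hx => (hf_pos x hx).ne')
  refine ⟨max B 1, by positivity, fun x => ?_⟩
  by_cases hx : ε ≤ g x
  · have hgB : g x ≤ B * f x := (div_le_iff₀ (hf_pos x hx)).1 (hB ⟨x, hx, rfl⟩)
    have : B * f x ≤ max B 1 * f x := by gcongr; exacts [hf_nonneg x, le_max_left B 1]
    linarith
  · have : 0 ≤ max B 1 * f x := mul_nonneg (by positivity) (hf_nonneg x)
    linarith [not_le.1 hx]

section Gradient

variable {E : Type*} [NormedAddCommGroup E] [InnerProductSpace ℝ E] [CompleteSpace E]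
  {f : E → ℝ}

theorem ContDiff.continuous_gradient (hf : ContDiff ℝ 1 f) : Continuous (gradient f) :=
  (InnerProductSpace.toDual ℝ E).symm.continuous.comp (hf.continuous_fderiv one_ne_zero)

theorem HasCompactSupport.gradient (hf : HasCompactSupport f) : HasCompactSupport (gradient f) :=
  hf.fderiv ℝ |>.comp_left (g := (InnerProductSpace.toDual ℝ E).symm) (map_zero _)

theorem IsLocalMin.gradient_eq_zero {x : E} (h : IsLocalMin f x) : gradient f x = 0 := by
  simp [gradient, h.fderiv_eq_zero]

end Gradient

/-- For a smooth, compactly supported, nonnegative function `a`, the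
gradient is bounded by `C_ε a + ε` for every `ε > 0`. -/
theorem statement9 (a : V3 → ℝ) (ha : ContDiff ℝ (⊤ : ℕ∞) a)
    (ha_nonneg : ∀ x, 0 ≤ a x) (ha_cpt : HasCompactSupport a) :
    ∀ ε > 0, ∃ C > 0, ∀ x : V3, ‖gradient a x‖ ≤ C * a x + ε := by
  intro ε hε
  have hgrad_zero : ∀ x, a x = 0 → ‖gradient a x‖ ≤ 0 := fun x hx => by
    have hmin : IsLocalMin a x := Eventually.of_forall fun y => hx ▸ ha_nonneg y
    simp [hmin.gradient_eq_zero]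
  exact exists_le_mul_add_of_hasCompactSupport ha.continuous ha_nonneg
    (ha.of_le (by simp)).continuous_gradient.norm ha_cpt.gradient.norm hgrad_zero hε
end
end

section
/- Let u and v be two classical solutions of the damped NLS on [0,T] (with the same G and a). Then for every t ∈ [0,T], d/dt ∫_{ℝ³} |u(t,x) − v(t,x)|² dx ≤ 3 ∫_{ℝ³} ( |u(t,x)|² + |v(t,x)|² ) |u(t,x) − v(t,x)|² dx. -/
noncomputable section

open MeasureTheory Real Set Filter

/-!
Write `w = u - v`. The decay of the solutions, locally uniform in time, allows differentiation
under the integral, `d/dt ∫ |w|² = 2 ∫ Re (∂ₜw · w̄)`, and makes every time slice a Schwartz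
function. By the equation, `∂ₜw = -i (|u|²u - |v|²v) + i div (G∇w) - a w`. The dispersive term
contributes `-2 Im ∫ w̄ div (G∇w)`, which vanishes: integrating by parts,
`∫ w̄ div (G∇w) = -∫ ∇w̄ · G∇w` is real because `G` is symmetric. The damping term `-2 ∫ a |w|²`
is nonpositive, and pointwise
`||u|²u - |v|²v| ≤ (|u|² + |u||v| + |v|²) |w| ≤ 3/2 (|u|² + |v|²) |w|`.
-/

namespace DampedNLS

open MeasureTheory Module Complex
open scoped SchwartzMap LineDeriv ComplexConjugate InnerProductSpace

section Slices

variable {E H : Type*} [NormedAddCommGroup E] [NormedSpace ℝ E]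
  [NormedAddCommGroup H] [NormedSpace ℝ H] {F F' : ℝ × E → H}

structure SmoothRapidDecay (F : ℝ × E → H) : Prop where
  smooth : ContDiff ℝ (⊤ : ℕ∞) F
  decay : ∀ (n k : ℕ) (K : Set ℝ), IsCompact K → ∃ C : ℝ, ∀ t ∈ K, ∀ x : E,
    ‖x‖ ^ k * ‖iteratedFDeriv ℝ n F (t, x)‖ ≤ C

theorem SmoothRapidDecay.sub (hF : SmoothRapidDecay F) (hF' : SmoothRapidDecay F') :
    SmoothRapidDecay fun p => F p - F' p where
  smooth := hF.smooth.sub hF'.smooth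
  decay n k K hK := by
    obtain ⟨C, hC⟩ := hF.decay n k K hK
    obtain ⟨C', hC'⟩ := hF'.decay n k K hK
    refine ⟨C + C', fun t ht x => ?_⟩
    change ‖x‖ ^ k * ‖iteratedFDeriv ℝ n (F - F') (t, x)‖ ≤ C + C'
    rw [iteratedFDeriv_sub_apply (hF.smooth.contDiffAt.of_le (mod_cast le_top))
      (hF'.smooth.contDiffAt.of_le (mod_cast le_top))]
    calc ‖x‖ ^ k * ‖iteratedFDeriv ℝ n F (t, x) - iteratedFDeriv ℝ n F' (t, x)‖
        ≤ ‖x‖ ^ k * ‖iteratedFDeriv ℝ n F (t, x)‖ + ‖x‖ ^ k * ‖iteratedFDeriv ℝ n F' (t, x)‖ := by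
          rw [← mul_add]; gcongr; exact norm_sub_le _ _
      _ ≤ C + C' := add_le_add (hC t ht x) (hC' t ht x)

theorem norm_iteratedFDeriv_slice_le {n : ℕ} (hF : ContDiff ℝ n F) (t : ℝ) (x : E) :
    ‖iteratedFDeriv ℝ n (fun y => F (t, y)) x‖ ≤ ‖iteratedFDeriv ℝ n F (t, x)‖ := by
  have hshift : ContDiff ℝ n fun p => F ((t, 0) + p) := hF.comp (contDiff_const.add contDiff_id)
  have hslice :
      (fun y => F (t, y)) = (fun p => F ((t, 0) + p)) ∘ ContinuousLinearMap.inr ℝ ℝ E := by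
    ext y; simp
  rw [hslice, ContinuousLinearMap.iteratedFDeriv_comp_right _ hshift x le_rfl,
    iteratedFDeriv_comp_add_left]
  refine (ContinuousMultilinearMap.norm_compContinuousLinearMap_le _ _).trans ?_
  refine mul_le_of_le_one_right (norm_nonneg _) (Finset.prod_le_one (fun _ _ => norm_nonneg _)
    fun _ _ => ContinuousLinearMap.norm_inr_le_one ℝ ℝ E) |>.trans_eq ?_
  rw [ContinuousLinearMap.inr_apply, Prod.mk_add_mk, add_zero, zero_add]

def SmoothRapidDecay.slice (hF : SmoothRapidDecay F) (t : ℝ) : 𝓢(E, H) where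
  toFun x := F (t, x)
  smooth' := hF.smooth.comp (contDiff_const.prodMk contDiff_id)
  decay' k n := by
    obtain ⟨C, hC⟩ := hF.decay n k {t} isCompact_singleton
    refine ⟨C, fun x => le_trans ?_ (hC t rfl x)⟩
    gcongr
    exact norm_iteratedFDeriv_slice_le (hF.smooth.of_le (mod_cast le_top)) t x

theorem DifferentiableAt.hasDerivAt_prodMk_left {t : ℝ} {x : E}
    (hF : DifferentiableAt ℝ F (t, x)) :
    HasDerivAt (fun s => F (s, x)) (fderiv ℝ F (t, x) (1, 0)) t :=
  hF.hasFDerivAt.comp_hasDerivAt t ((hasDerivAt_id t).prodMk (hasDerivAt_const t x))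

end Slices

section Solutions

variable {G : V3 → Matrix (Fin 3) (Fin 3) ℝ} {a : V3 → ℝ} {s : Set ℝ} {u : ℝ → V3 → ℂ}

theorem IsSolution.smoothRapidDecay (hu : IsSolution G a s u) :
    SmoothRapidDecay fun p : ℝ × V3 => u p.1 p.2 :=
  ⟨hu.smooth, hu.decay⟩

theorem IsSolution.hasDerivAt_timeDeriv (hu : IsSolution G a s u) (t : ℝ) (x : V3) :
    HasDerivAt (fun s => u s x) (timeDeriv u t x) t :=
  (DifferentiableAt.hasDerivAt_prodMk_left
    (hu.smooth.differentiable (by simp) (t, x))).differentiableAt.hasDerivAt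

end Solutions

theorem le_mul_one_add_rpow_neg_of_pow_mul_le (n : ℕ) {r y A B : ℝ} (hr : 0 ≤ r) (hy : 0 ≤ y)
    (hA : y ≤ A) (hB : r ^ n * y ≤ B) : y ≤ 2 ^ n * (A + B) * (1 + r) ^ (-(n : ℝ)) := by
  have hB₀ : 0 ≤ r ^ n * y := by positivity
  have key : (1 + r) ^ n * y ≤ 2 ^ n * (A + B) :=
    calc (1 + r) ^ n * y ≤ 2 ^ (n - 1) * (1 ^ n + r ^ n) * y := by
          gcongr; exact add_pow_le zero_le_one hr n
      _ = 2 ^ (n - 1) * (y + r ^ n * y) := by ring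
      _ ≤ 2 ^ (n - 1) * (A + B) := by gcongr
      _ ≤ 2 ^ n * (A + B) := by
          gcongr
          · linarith
          · exact one_le_two
          · exact n.sub_le 1
  rw [Real.rpow_neg (by positivity), Real.rpow_natCast, ← div_eq_mul_inv,
    le_div_iff₀ (by positivity)]
  linarith

section DerivIntegral

variable {E H : Type*} [NormedAddCommGroup E] [NormedSpace ℝ E]
  [NormedAddCommGroup H] [InnerProductSpace ℝ H] {F : ℝ × E → H}

theorem SmoothRapidDecay.exists_norm_inner_deriv_le (hF : SmoothRapidDecay F) {K : Set ℝ}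
    (hK : IsCompact K) (k : ℕ) : ∃ C, ∀ s ∈ K, ∀ x,
      ‖⟪F (s, x), deriv (fun s => F (s, x)) s⟫_ℝ‖ ≤ C * (1 + ‖x‖) ^ (-(k : ℝ)) := by
  obtain ⟨C, hC⟩ := hF.decay 0 0 K hK
  obtain ⟨D₀, hD₀⟩ := hF.decay 1 0 K hK
  obtain ⟨D, hD⟩ := hF.decay 1 k K hK
  simp only [pow_zero, one_mul, norm_iteratedFDeriv_zero, norm_iteratedFDeriv_one] at hC hD₀ hD
  refine ⟨C * (2 ^ k * (D₀ + D)), fun s hs x => ?_⟩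
  have hτ : ‖deriv (fun s => F (s, x)) s‖ ≤ ‖fderiv ℝ F (s, x)‖ := by
    rw [(DifferentiableAt.hasDerivAt_prodMk_left (hF.smooth.differentiable (by simp) (s, x))).deriv]
    simpa using (fderiv ℝ F (s, x)).le_opNorm (1, 0)
  calc ‖⟪F (s, x), deriv (fun s => F (s, x)) s⟫_ℝ‖
      ≤ ‖F (s, x)‖ * ‖deriv (fun s => F (s, x)) s‖ := norm_inner_le_norm _ _
    _ ≤ C * (2 ^ k * (D₀ + D) * (1 + ‖x‖) ^ (-(k : ℝ))) := by
        gcongr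
        · exact (norm_nonneg _).trans (hC s hs x)
        · exact hC s hs x
        · exact hτ.trans (le_mul_one_add_rpow_neg_of_pow_mul_le k (norm_nonneg x)
            (norm_nonneg _) (hD₀ s hs x) (hD s hs x))
    _ = _ := by ring

variable [FiniteDimensional ℝ E] [MeasurableSpace E] [BorelSpace E]
  {μ : Measure E} [μ.IsAddHaarMeasure]

theorem SmoothRapidDecay.hasDerivAt_integral_norm_sq (hF : SmoothRapidDecay F) (t : ℝ) :
    Integrable (fun x => 2 * ⟪F (t, x), deriv (fun s => F (s, x)) t⟫_ℝ) μ ∧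
      HasDerivAt (fun s => ∫ x, ‖F (s, x)‖ ^ 2 ∂μ)
        (∫ x, 2 * ⟪F (t, x), deriv (fun s => F (s, x)) t⟫_ℝ ∂μ) t := by
  have hdiff : Differentiable ℝ F := hF.smooth.differentiable (by simp)
  obtain ⟨C, hC⟩ := hF.exists_norm_inner_deriv_le isCompact_Icc (finrank ℝ E + 1)
    (K := Set.Icc (t - 1) (t + 1))
  have hslice : ∀ s, Continuous fun x => F (s, x) := fun s =>
    hF.smooth.continuous.comp (continuous_const.prodMk continuous_id)
  have hcont : Continuous fun x => 2 * ⟪F (t, x), deriv (fun s => F (s, x)) t⟫_ℝ := by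
    simp only [fun x => (DifferentiableAt.hasDerivAt_prodMk_left (hdiff (t, x))).deriv]
    exact continuous_const.mul ((hslice t).inner (((hF.smooth.continuous_fderiv (by simp)).comp
      (continuous_const.prodMk continuous_id)).clm_apply continuous_const))
  refine hasDerivAt_integral_of_dominated_loc_of_deriv_le
    (Icc_mem_nhds (by linarith : t - 1 < t) (by linarith : t < t + 1))
    (.of_forall fun s => ((hslice s).norm.pow 2).aestronglyMeasurable)
    (((hF.slice t).memLp 2 μ).integrable_norm_pow two_ne_zero) hcont.aestronglyMeasurable
    (.of_forall fun x s hs => ?_) ((integrable_one_add_norm (r := (finrank ℝ E + 1 : ℕ))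
      (by push_cast; exact lt_add_one _)).const_mul (2 * C))
    (.of_forall fun x s _ =>
      (DifferentiableAt.hasDerivAt_prodMk_left (hdiff (s, x))).differentiableAt.hasDerivAt.norm_sq)
  rw [norm_mul, Real.norm_two, mul_assoc]
  exact mul_le_mul_of_nonneg_left (hC s hs x) zero_le_two

end DerivIntegral

def conjMulCLM : ℂ →L[ℝ] ℂ →L[ℝ] ℂ :=
  (ContinuousLinearMap.mul ℝ ℂ).comp Complex.conjCLE.toContinuousLinearMap

@[simp]
theorem conjMulCLM_apply (z w : ℂ) : conjMulCLM z w = conj z * w := rfl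

section Schwartz

variable {D : Type*} [NormedAddCommGroup D] [NormedSpace ℝ D]

theorem integrable_conj_mul [MeasurableSpace D] [BorelSpace D] [SecondCountableTopology D]
    {μ : Measure D} [μ.HasTemperateGrowth] (f g : 𝓢(D, ℂ)) :
    Integrable (fun x => conj (f x) * g x) μ :=
  (SchwartzMap.bilinLeftCLM conjMulCLM g.hasTemperateGrowth f).integrable

theorem coe_smulLeftCLM_ofReal {g : D → ℝ} (hg : g.HasTemperateGrowth) (f : 𝓢(D, ℂ)) :
    ⇑(SchwartzMap.smulLeftCLM ℂ g f) = fun x => (g x : ℂ) * f x := by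
  ext x
  simp [hg, Complex.real_smul]

end Schwartz

theorem Coeffs.hasTemperateGrowth_entry {G : V3 → Matrix (Fin 3) (Fin 3) ℝ} {a : V3 → ℝ}
    (h : Coeffs G a) (i j : Fin 3) : (fun x => G x i j).HasTemperateGrowth := by
  have hcpt : HasCompactSupport fun x => G x i j - (1 : Matrix (Fin 3) (Fin 3) ℝ) i j :=
    HasCompactSupport.intro h.G_cpt fun x hx => by
      have hx1 : G x = 1 := not_not.mp fun hne => hx (subset_closure hne)
      simp [hx1]
  convert (hcpt.hasTemperateGrowth ((h.G_smooth i j).sub contDiff_const)).add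
    (.const ((1 : Matrix (Fin 3) (Fin 3) ℝ) i j)) using 1
  ext x
  simp

def divGCLM (G : V3 → Matrix (Fin 3) (Fin 3) ℝ) : 𝓢(V3, ℂ) →L[ℝ] 𝓢(V3, ℂ) :=
  ∑ i, ∑ j, LineDeriv.lineDerivOpCLM ℝ 𝓢(V3, ℂ) (EuclideanSpace.single i 1 : V3) ∘L
    SchwartzMap.smulLeftCLM ℂ (fun x => G x i j) ∘L
      LineDeriv.lineDerivOpCLM ℝ 𝓢(V3, ℂ) (EuclideanSpace.single j 1 : V3)

section DivergenceForm

variable {G : V3 → Matrix (Fin 3) (Fin 3) ℝ}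

theorem coe_divGCLM (hG : ∀ i j, (fun x => G x i j).HasTemperateGrowth) (f : 𝓢(V3, ℂ)) :
    ⇑(divGCLM G f) = divG G f := by
  ext x
  simp only [divGCLM, sum_apply, ContinuousLinearMap.coe_comp, Function.comp_apply,
    LineDeriv.lineDerivOpCLM_apply, SchwartzMap.lineDerivOp_apply_eq_fderiv,
    coe_smulLeftCLM_ofReal (hG _ _)]
  rfl

theorem integrable_conj_mul_divG (hG : ∀ i j, (fun x => G x i j).HasTemperateGrowth)
    (f : 𝓢(V3, ℂ)) :
    Integrable fun x => conj (f x) * divG G f x := by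
  rw [← coe_divGCLM hG]
  exact integrable_conj_mul _ _

theorem integral_conj_mul_divG (hG : ∀ i j, (fun x => G x i j).HasTemperateGrowth)
    (f : 𝓢(V3, ℂ)) :
    ∫ x, conj (f x) * divG G f x
      = -∑ i, ∑ j, ∫ x, conj (pd i f x) * (G x i j * pd j f x) := by
  set e : Fin 3 → V3 := fun i => EuclideanSpace.single i 1
  set S : Fin 3 → Fin 3 → 𝓢(V3, ℂ) := fun i j =>
    SchwartzMap.smulLeftCLM ℂ (fun x => G x i j) (∂_{e j} f)
  have hdiv : divG G f = fun x => ∑ i, ∑ j, ∂_{e i} (S i j) x := by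
    rw [← coe_divGCLM hG]
    ext x
    simp [divGCLM, sum_apply, S, e]
  calc ∫ x, conj (f x) * divG G f x
      = ∑ i, ∑ j, ∫ x, conj (f x) * ∂_{e i} (S i j) x := by
        simp only [hdiv, Finset.mul_sum]
        rw [integral_finsetSum _ fun i _ =>
          integrable_finsetSum _ fun j _ => integrable_conj_mul f _]
        exact Finset.sum_congr rfl fun i _ =>
          integral_finsetSum _ fun j _ => integrable_conj_mul f _
    _ = ∑ i, ∑ j, -∫ x, conj (∂_{e i} f x) * S i j x := by
        refine Finset.sum_congr rfl fun i _ => Finset.sum_congr rfl fun j _ => ?_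
        exact SchwartzMap.integral_bilinear_lineDerivOp_right_eq_neg_left f (S i j) conjMulCLM (e i)
    _ = _ := by
        simp only [Finset.sum_neg_distrib, S, coe_smulLeftCLM_ofReal (hG _ _)]
        rfl

theorem integral_im_conj_mul_divG (hG : ∀ i j, (fun x => G x i j).HasTemperateGrowth)
    (hsymm : ∀ x i j, G x i j = G x j i) (f : 𝓢(V3, ℂ)) :
    ∫ x, (conj (f x) * divG G f x).im = 0 := by
  refine (integral_im (integrable_conj_mul_divG hG f)).trans ?_
  change (∫ x, conj (f x) * divG G f x).im = 0
  rw [integral_conj_mul_divG hG, Complex.neg_im, neg_eq_zero]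
  set y : Fin 3 → Fin 3 → ℂ := fun i j => ∫ x, conj (pd i f x) * (G x i j * pd j f x)
  have hy : ∀ i j, conj (y i j) = y j i := fun i j => by
    simp only [y, ← integral_conj, map_mul, Complex.conj_conj, Complex.conj_ofReal, hsymm _ i j]
    congr 1
    ext x
    ring
  change (∑ i, ∑ j, y i j).im = 0
  refine Complex.conj_eq_iff_im.mp ?_
  simp only [map_sum, hy]
  exact Finset.sum_comm

end DivergenceForm

theorem integrable_norm_sq_add_norm_sq_mul_norm_sq {D F : Type*} [NormedAddCommGroup D]
    [NormedSpace ℝ D] [MeasurableSpace D] [BorelSpace D] [SecondCountableTopology D]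
    [NormedAddCommGroup F] [NormedSpace ℝ F] {μ : Measure D} [μ.HasTemperateGrowth]
    (f g h : 𝓢(D, F)) :
    Integrable (fun x => (‖f x‖ ^ 2 + ‖g x‖ ^ 2) * ‖h x‖ ^ 2) μ := by
  refine ((h.memLp 2 μ).integrable_norm_pow two_ne_zero).bdd_mul (by fun_prop)
    (c := SchwartzMap.seminorm ℝ 0 0 f ^ 2 + SchwartzMap.seminorm ℝ 0 0 g ^ 2)
    (.of_forall fun x => ?_)
  rw [Real.norm_of_nonneg (by positivity)]
  gcongr <;> exact SchwartzMap.norm_le_seminorm ℝ _ _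

theorem two_mul_norm_cubic_sub_le (U V : ℂ) :
    2 * ‖(‖U‖ : ℂ) ^ 2 * U - (‖V‖ : ℂ) ^ 2 * V‖ ≤ 3 * (‖U‖ ^ 2 + ‖V‖ ^ 2) * ‖U - V‖ := by
  have hsplit : (‖U‖ : ℂ) ^ 2 * U - (‖V‖ : ℂ) ^ 2 * V
      = (‖U‖ : ℂ) ^ 2 * (U - V) + ((‖U‖ - ‖V‖) * (‖U‖ + ‖V‖) : ℝ) * V := by
    push_cast; ring
  have hnorm : ‖(‖U‖ : ℂ) ^ 2 * U - (‖V‖ : ℂ) ^ 2 * V‖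
      ≤ ‖U‖ ^ 2 * ‖U - V‖ + |‖U‖ - ‖V‖| * (‖U‖ + ‖V‖) * ‖V‖ := by
    rw [hsplit]
    refine (norm_add_le _ _).trans_eq ?_
    rw [norm_mul, norm_mul, norm_pow, norm_real, norm_real, Real.norm_eq_abs, Real.norm_eq_abs,
      abs_norm, abs_mul, abs_of_nonneg (by positivity : 0 ≤ ‖U‖ + ‖V‖)]
  nlinarith [mul_le_mul_of_nonneg_right (abs_norm_sub_norm_le U V)
      (by positivity : 0 ≤ (‖U‖ + ‖V‖) * ‖V‖),
    mul_nonneg (sq_nonneg (‖U‖ - ‖V‖)) (norm_nonneg (U - V))]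

theorem two_inner_sub_le_of_damped_nls {τU τV DU DV U V : ℂ} {a : ℝ} (ha : 0 ≤ a)
    (hU : I * τU + DU + I * a * U = (‖U‖ : ℂ) ^ 2 * U)
    (hV : I * τV + DV + I * a * V = (‖V‖ : ℂ) ^ 2 * V) :
    2 * ⟪U - V, τU - τV⟫_ℝ
      ≤ 3 * ((‖U‖ ^ 2 + ‖V‖ ^ 2) * ‖U - V‖ ^ 2) - 2 * (conj (U - V) * (DU - DV)).im := by
  set N := (‖U‖ : ℂ) ^ 2 * U - (‖V‖ : ℂ) ^ 2 * V
  have hτ : τU - τV = -I * N + I * (DU - DV) - a * (U - V) := by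
    linear_combination (-I) * hU + I * hV + (τU - τV + a * (U - V)) * I_sq
  have hinner : ⟪U - V, τU - τV⟫_ℝ
      = (-I * N * conj (U - V)).re - (conj (U - V) * (DU - DV)).im - a * ‖U - V‖ ^ 2 := by
    rw [Complex.inner, hτ, Complex.sq_norm, normSq_apply]
    simp only [mul_re, mul_im, sub_re, sub_im, add_re, add_im, neg_re, neg_im, I_re, I_im,
      conj_re, conj_im, ofReal_re, ofReal_im]
    ring
  have hN : (-I * N * conj (U - V)).re ≤ ‖N‖ * ‖U - V‖ :=
    (re_le_norm _).trans_eq (by simp [-map_sub])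
  nlinarith [mul_le_mul_of_nonneg_right (two_mul_norm_cubic_sub_le U V) (norm_nonneg (U - V)),
    mul_nonneg ha (sq_nonneg ‖U - V‖)]

end DampedNLS

open DampedNLS MeasureTheory
open scoped ComplexConjugate InnerProductSpace

theorem statement18_general (G : V3 → Matrix (Fin 3) (Fin 3) ℝ) (a : V3 → ℝ) (hGa : Coeffs G a)
    (T : ℝ) (u v : ℝ → V3 → ℂ)
    (hu : IsSolution G a (Set.Icc 0 T) u) (hv : IsSolution G a (Set.Icc 0 T) v) :
    ∀ t ∈ Set.Icc (0 : ℝ) T,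
      deriv (fun s => ∫ x : V3, ‖u s x - v s x‖ ^ 2) t
        ≤ 3 * ∫ x : V3, (‖u t x‖ ^ 2 + ‖v t x‖ ^ 2) * ‖u t x - v t x‖ ^ 2 := by
  intro t ht
  have hG := hGa.hasTemperateGrowth_entry
  obtain ⟨hint, hderiv⟩ := (hu.smoothRapidDecay.sub hv.smoothRapidDecay).hasDerivAt_integral_norm_sq
    (μ := volume) t
  set U := hu.smoothRapidDecay.slice t
  set V := hv.smoothRapidDecay.slice t
  have hpoint : ∀ x, 2 * ⟪u t x - v t x, deriv (fun s => u s x - v s x) t⟫_ℝ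
      ≤ 3 * ((‖U x‖ ^ 2 + ‖V x‖ ^ 2) * ‖(U - V) x‖ ^ 2)
        - 2 * (conj ((U - V) x) * divG G ⇑(U - V) x).im := fun x => by
    rw [((hu.hasDerivAt_timeDeriv t x).fun_sub (hv.hasDerivAt_timeDeriv t x)).deriv,
      ← coe_divGCLM hG, map_sub, sub_apply, sub_apply, coe_divGCLM hG, coe_divGCLM hG]
    exact two_inner_sub_le_of_damped_nls (hGa.a_nonneg x) (hu.eqn t ht x) (hv.eqn t ht x)
  have hcubic := (integrable_norm_sq_add_norm_sq_mul_norm_sq U V (U - V) (μ := volume)).const_mul 3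
  have hdisp : Integrable fun x => 2 * (conj ((U - V) x) * divG G ⇑(U - V) x).im :=
    (integrable_conj_mul_divG hG (U - V)).im.const_mul 2
  calc deriv (fun s => ∫ x : V3, ‖u s x - v s x‖ ^ 2) t
      = ∫ x, 2 * ⟪u t x - v t x, deriv (fun s => u s x - v s x) t⟫_ℝ := hderiv.deriv
    _ ≤ ∫ x, (3 * ((‖U x‖ ^ 2 + ‖V x‖ ^ 2) * ‖(U - V) x‖ ^ 2)
          - 2 * (conj ((U - V) x) * divG G ⇑(U - V) x).im) :=
        integral_mono hint (hcubic.sub hdisp) hpoint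
    _ = 3 * ∫ x, (‖U x‖ ^ 2 + ‖V x‖ ^ 2) * ‖(U - V) x‖ ^ 2 := by
        rw [integral_sub hcubic hdisp, integral_const_mul, integral_const_mul,
          integral_im_conj_mul_divG hG hGa.G_symm, mul_zero, sub_zero]

/-- The Yudovich-type `L²` stability estimate for two solutions. -/
theorem statement18 (G : V3 → Matrix (Fin 3) (Fin 3) ℝ) (a : V3 → ℝ) (hGa : Coeffs G a)
    (T : ℝ) (hT : 0 ≤ T) (u v : ℝ → V3 → ℂ)
    (hu : IsSolution G a (Set.Icc 0 T) u) (hv : IsSolution G a (Set.Icc 0 T) v) :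
    ∀ t ∈ Set.Icc (0 : ℝ) T,
      deriv (fun s => ∫ x : V3, ‖u s x - v s x‖ ^ 2) t
        ≤ 3 * ∫ x : V3, (‖u t x‖ ^ 2 + ‖v t x‖ ^ 2) * ‖u t x - v t x‖ ^ 2 :=
  statement18_general G a hGa T u v hu hv
end
end
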